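/- arXiv:math/0304327 — 3 statements merged into one kernel-verified Lean document; each statement's English description precedes it below -/
import Mathlib

section
/- Uniqueness of the Harder–Narasimhan filtration: if 0 = V₀ ⊂ V₁ ⊂ ... ⊂ V_n = V and 0 = W₀ ⊂ W₁ ⊂ ... ⊂ W_m = V are two filtrations such that each successive quotient V_i/V_{i-1} and W_j/W_{j-1} is semistable and the slopes μ(V_i/V_{i-1}) and μ(W_j/W_{j-1}) are strictly decreasing in i and j respectively, then n = m and V_i = W_i for all i. -/
open CategoryTheory CategoryTheory.Limits

/-- The slope `μ = deg / rank` of an object. -/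
noncomputable def slopeOf {C : Type*} [Category C] [Abelian C]
    (deg rank : C → ℚ) (X : C) : ℚ := deg X / rank X

/-- An object is (slope-)semistable if every nonzero subobject has slope at most
the slope of the object. -/
def SlopeSemistable {C : Type*} [Category C] [Abelian C]
    (deg rank : C → ℚ) (V : C) : Prop :=
  ∀ (W : C) (f : W ⟶ V), Mono f → ¬ IsZero W →
    slopeOf deg rank W ≤ slopeOf deg rank V

/-- The successive quotient `F i.succ / F i.castSucc` of a monotone chain of
subobjects. -/
noncomputable def succQuot {C : Type*} [Category C] [Abelian C] {V : C} {n : ℕ}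
    (F : Fin (n + 1) → CategoryTheory.Subobject V) (hF : Monotone F) (i : Fin n) : C :=
  cokernel (CategoryTheory.Subobject.ofLE (F i.castSucc) (F i.succ)
    (hF (Fin.castSucc_lt_succ : i.castSucc < i.succ).le))


/-!
Show `V_k = W_k` by induction on `k`. If `V_k = W_k`, the least `j` with `V_{k+1} ≤ W_{j+1}`
satisfies `j ≥ k`, and the inclusion induces a nonzero map `V_{k+1}/V_k ⟶ W_{j+1}/W_j`.
A nonzero map `f : A ⟶ B` between semistable objects forces `μ A ≤ μ (coim f) ≤ μ B`
(the first inequality is the seesaw property of `0 → ker f → A → coim f → 0`), hence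
`μ(V_{k+1}/V_k) ≤ μ(W_{j+1}/W_j) ≤ μ(W_{k+1}/W_k)`. By symmetry all these slopes agree, so
strict decrease forces `j = k`, whence `V_{k+1} ≤ W_{k+1}` and conversely.
-/

theorem Fin.exists_not_castSucc_and_succ {m : ℕ} {P : Fin (m + 1) → Prop}
    (h0 : ¬ P 0) (hlast : P (Fin.last m)) : ∃ j : Fin m, ¬ P j.castSucc ∧ P j.succ := by
  by_contra! h
  exact Fin.induction h0 h (Fin.last m) hlast

namespace CategoryTheory.Subobject

variable {C : Type*} [Category C] {V : C} {A B A' B' : Subobject V}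

theorem ofLE_comp_ofLE_eq_ofLE_comp_ofLE (hAB : A ≤ B) (hA'B' : A' ≤ B') (hA : A ≤ A')
    (hB : B ≤ B') : ofLE A B hAB ≫ ofLE B B' hB = ofLE A A' hA ≫ ofLE A' B' hA'B' := by
  rw [ofLE_comp_ofLE, ofLE_comp_ofLE]

variable [Abelian C]

theorem le_of_cokernel_map_eq_zero (hAB : A ≤ B) (hA'B' : A' ≤ B') (hA : A ≤ A')
    (hB : B ≤ B')
    (h : cokernel.map _ _ _ _ (ofLE_comp_ofLE_eq_ofLE_comp_ofLE hAB hA'B' hA hB) = 0) :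
    B ≤ A' := by
  have hπ : ofLE B B' hB ≫ cokernel.π (ofLE A' B' hA'B') = 0 := by
    simpa using cokernel.π _ ≫= h
  refine le_of_comm (Abelian.monoLift _ _ hπ) ?_
  rw [← ofLE_arrow hA'B', ← Category.assoc, Abelian.monoLift_comp, ofLE_arrow]

end CategoryTheory.Subobject

section Slope

variable {C : Type*} [Category C] [Abelian C]

structure IsSlopeFunction (deg rank : C → ℚ) : Prop where
  deg_eq_add : ∀ ⦃X Y : C⦄ (f : X ⟶ Y), Mono f → deg Y = deg X + deg (cokernel f)
  rank_eq_add : ∀ ⦃X Y : C⦄ (f : X ⟶ Y), Mono f → rank Y = rank X + rank (cokernel f)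
  rank_pos : ∀ X : C, ¬ IsZero X → 0 < rank X

variable {deg rank : C → ℚ}

theorem IsSlopeFunction.slopeOf_le_slopeOf_cokernel (hμ : IsSlopeFunction deg rank)
    {K A : C} (f : K ⟶ A) [Mono f] (hK : ¬ IsZero K) (hQ : ¬ IsZero (cokernel f))
    (h : slopeOf deg rank K ≤ slopeOf deg rank A) :
    slopeOf deg rank A ≤ slopeOf deg rank (cokernel f) := by
  have hrK := hμ.rank_pos K hK
  have hrQ := hμ.rank_pos _ hQ
  have hrA : 0 < rank A := by rw [hμ.rank_eq_add f ‹_›]; positivity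
  unfold slopeOf at h ⊢
  rw [div_le_div_iff₀ hrK hrA] at h
  rw [div_le_div_iff₀ hrA hrQ]
  rw [hμ.deg_eq_add f ‹_›, hμ.rank_eq_add f ‹_›] at h ⊢
  linear_combination h

theorem IsSlopeFunction.hom_eq_zero_of_slopeOf_lt (hμ : IsSlopeFunction deg rank) {A B : C}
    (hA : SlopeSemistable deg rank A) (hB : SlopeSemistable deg rank B)
    (hlt : slopeOf deg rank B < slopeOf deg rank A) (f : A ⟶ B) : f = 0 := by
  by_contra hf
  refine hlt.not_ge ?_
  by_cases hm : Mono f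
  · exact hB A f hm fun h => hf (h.eq_of_src f 0)
  have hK : ¬ IsZero (kernel f) := fun h =>
    hm (Abelian.mono_of_kernel_ι_eq_zero f (h.eq_of_src _ _))
  have hQ : ¬ IsZero (Abelian.coimage f) := fun h => hf <| by
    rw [← Abelian.coimage.fac f, h.eq_of_tgt (Abelian.coimage.π f) 0, zero_comp]
  calc slopeOf deg rank A ≤ slopeOf deg rank (Abelian.coimage f) :=
        hμ.slopeOf_le_slopeOf_cokernel (kernel.ι f) hK hQ (hA _ (kernel.ι f) inferInstance hK)
    _ ≤ slopeOf deg rank B := hB _ (Abelian.factorThruCoimage f) inferInstance hQ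

end Slope

section Filtration

variable {C : Type*} [Category C] [Abelian C] {deg rank : C → ℚ} {V : C} {n m : ℕ}
  {Vf : Fin (n + 1) → Subobject V} {Wf : Fin (m + 1) → Subobject V}

theorem IsSlopeFunction.exists_le_succ_and_slopeOf_le (hμ : IsSlopeFunction deg rank)
    (hV : StrictMono Vf) (hW : StrictMono Wf) (hW_top : Wf (Fin.last m) = ⊤)
    (hVss : ∀ i, SlopeSemistable deg rank (succQuot Vf hV.monotone i))
    (hWss : ∀ j, SlopeSemistable deg rank (succQuot Wf hW.monotone j))
    {i : Fin n} {k : Fin (m + 1)} (hik : Vf i.castSucc = Wf k) :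
    ∃ j : Fin m, k ≤ j.castSucc ∧ Vf i.succ ≤ Wf j.succ ∧
      slopeOf deg rank (succQuot Vf hV.monotone i) ≤
        slopeOf deg rank (succQuot Wf hW.monotone j) := by
  have hlt : Wf k < Vf i.succ := hik ▸ hV Fin.castSucc_lt_succ
  obtain ⟨j, hnot, hle⟩ := Fin.exists_not_castSucc_and_succ (P := fun j => Vf i.succ ≤ Wf j)
    (fun h => hlt.not_ge (h.trans (hW.monotone (Fin.zero_le k)))) (hW_top ▸ le_top)
  have hkj : k ≤ j.castSucc := by
    by_contra! h
    exact hlt.not_ge (hle.trans (hW.monotone (Fin.castSucc_lt_iff_succ_le.mp h)))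
  refine ⟨j, hkj, hle, not_lt.mp fun hslope => hnot ?_⟩
  exact Subobject.le_of_cokernel_map_eq_zero _ _ (hik ▸ hW.monotone hkj) hle
    (hμ.hom_eq_zero_of_slopeOf_lt (hVss i) (hWss j) hslope _)

structure IsHarderNarasimhanFiltration (deg rank : C → ℚ) (F : Fin (n + 1) → Subobject V) :
    Prop where
  strictMono : StrictMono F
  bot : F 0 = ⊥
  top : F (Fin.last n) = ⊤
  semistable : ∀ i, SlopeSemistable deg rank (succQuot F strictMono.monotone i)
  slope_strictAnti : StrictAnti fun i => slopeOf deg rank (succQuot F strictMono.monotone i)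

namespace IsHarderNarasimhanFiltration

theorem succ_eq_of_castSucc_eq (hμ : IsSlopeFunction deg rank)
    (hV : IsHarderNarasimhanFiltration deg rank Vf)
    (hW : IsHarderNarasimhanFiltration deg rank Wf)
    {i : Fin n} {i' : Fin m} (h : Vf i.castSucc = Wf i'.castSucc) : Vf i.succ = Wf i'.succ := by
  obtain ⟨j, hi'j, hVW, hij⟩ := hμ.exists_le_succ_and_slopeOf_le hV.strictMono hW.strictMono
    hW.top hV.semistable hW.semistable h
  obtain ⟨j', hij', hWV, hi'j'⟩ := hμ.exists_le_succ_and_slopeOf_le hW.strictMono hV.strictMono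
    hV.top hW.semistable hV.semistable h.symm
  rw [Fin.castSucc_le_castSucc_iff] at hi'j hij'
  have hWj := hW.slope_strictAnti.antitone hi'j
  have hVj' := hV.slope_strictAnti.antitone hij'
  obtain rfl : j = i' := le_antisymm (hW.slope_strictAnti.le_iff_ge.mp (by linarith)) hi'j
  obtain rfl : j' = i := le_antisymm (hV.slope_strictAnti.le_iff_ge.mp (by linarith)) hij'
  exact le_antisymm hVW hWV

theorem eq_of_val_eq (hμ : IsSlopeFunction deg rank)
    (hV : IsHarderNarasimhanFiltration deg rank Vf)
    (hW : IsHarderNarasimhanFiltration deg rank Wf) :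
    ∀ (k : ℕ) (hkn : k < n + 1) (hkm : k < m + 1), Vf ⟨k, hkn⟩ = Wf ⟨k, hkm⟩
  | 0, _, _ => hV.bot.trans hW.bot.symm
  | k + 1, hkn, hkm =>
    succ_eq_of_castSucc_eq hμ hV hW (i := ⟨k, by omega⟩) (i' := ⟨k, by omega⟩)
      (eq_of_val_eq hμ hV hW k (by omega) (by omega))

theorem length_le (hμ : IsSlopeFunction deg rank)
    (hV : IsHarderNarasimhanFiltration deg rank Vf)
    (hW : IsHarderNarasimhanFiltration deg rank Wf) :
    n ≤ m := by
  by_contra! hmn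
  have hlt :=
    hV.strictMono (Fin.mk_lt_of_lt_val hmn : (⟨m, by omega⟩ : Fin (n + 1)) < Fin.last n)
  rw [hV.eq_of_val_eq hμ hW m _ m.lt_succ_self, hV.top] at hlt
  exact hlt.ne hW.top

end IsHarderNarasimhanFiltration

end Filtration

/-- Uniqueness of the Harder–Narasimhan filtration: two filtrations with
semistable successive quotients of strictly decreasing slopes coincide. -/
theorem harderNarasimhan_unique
    {C : Type*} [Category C] [Abelian C] (deg rank : C → ℚ)
    (hdeg : ∀ ⦃X Y : C⦄ (f : X ⟶ Y), Mono f → deg Y = deg X + deg (cokernel f))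
    (hrank : ∀ ⦃X Y : C⦄ (f : X ⟶ Y), Mono f → rank Y = rank X + rank (cokernel f))
    (hrank_pos : ∀ X : C, ¬ IsZero X → 0 < rank X)
    (V : C) (n m : ℕ)
    (Vf : Fin (n + 1) → Subobject V) (Wf : Fin (m + 1) → Subobject V)
    (hVmono : StrictMono Vf) (hWmono : StrictMono Wf)
    (hV0 : Vf 0 = ⊥) (hVn : Vf (Fin.last n) = ⊤)
    (hW0 : Wf 0 = ⊥) (hWm : Wf (Fin.last m) = ⊤)
    (hVss : ∀ i : Fin n, SlopeSemistable deg rank (succQuot Vf hVmono.monotone i))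
    (hWss : ∀ j : Fin m, SlopeSemistable deg rank (succQuot Wf hWmono.monotone j))
    (hVdec : ∀ i j : Fin n, i < j →
      slopeOf deg rank (succQuot Vf hVmono.monotone j) <
        slopeOf deg rank (succQuot Vf hVmono.monotone i))
    (hWdec : ∀ i j : Fin m, i < j →
      slopeOf deg rank (succQuot Wf hWmono.monotone j) <
        slopeOf deg rank (succQuot Wf hWmono.monotone i)) :
    ∃ h : n = m, ∀ i : Fin (n + 1), Vf i = Wf (Fin.cast (by rw [h]) i) := by
  have hμ : IsSlopeFunction deg rank := ⟨hdeg, hrank, hrank_pos⟩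
  have hV : IsHarderNarasimhanFiltration deg rank Vf := ⟨hVmono, hV0, hVn, hVss, hVdec⟩
  have hW : IsHarderNarasimhanFiltration deg rank Wf := ⟨hWmono, hW0, hWm, hWss, hWdec⟩
  obtain rfl : n = m := le_antisymm (hV.length_le hμ hW) (hW.length_le hμ hV)
  exact ⟨rfl, fun i => hV.eq_of_val_eq hμ hW i i.isLt i.isLt⟩
end

section
/- For a group G acting on a vector space V over a field, if a normal subgroup N ≤ G of finite index prime to the characteristic acts completely reducibly on V, then G acts completely reducibly on V. -/
open MonoidAlgebra

/-- Maschke-type ascent: if a normal subgroup `N` of `G` of finite index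
invertible in the field `k` acts completely reducibly on `V`, then `G` acts
completely reducibly on `V`. -/
theorem semisimple_of_normal_semisimple
    {k : Type*} [Field k] {G : Type*} [Group G]
    {V : Type*} [AddCommGroup V] [Module k V] [FiniteDimensional k V]
    (ρ : Representation k G V)
    (N : Subgroup G) [N.Normal]
    (hfin : N.index ≠ 0) (hchar : (N.index : k) ≠ 0)
    (hN : IsSemisimpleModule (MonoidAlgebra k N) (Representation.asModule (ρ.comp N.subtype : Representation k N V))) :
    IsSemisimpleModule (MonoidAlgebra k G) ρ.asModule := by
  classical
  have hFin : Finite (G ⧸ N) := Nat.finite_of_card_ne_zero hfin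
  letI : Fintype (G ⧸ N) := Fintype.ofFinite _
  set ρ' : Representation k N V := ρ.comp N.subtype with hρ'def
  refine (isSemisimpleModule_iff _ _).mpr ⟨?_⟩
  intro W
  -- basic smul descriptions
  have hsmulG : ∀ (r : MonoidAlgebra k G) (x : ρ.asModule),
      r • x = ρ.asAlgebraHom r x := fun _ _ => rfl
  have hsmulN : ∀ (r : MonoidAlgebra k N) (x : ρ'.asModule),
      r • x = ρ'.asAlgebraHom r x := fun _ _ => rfl
  have hcomp : ∀ (a b : G) (v : V), ρ a (ρ b v) = ρ (a * b) v := by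
    intro a b v; rw [map_mul]; rfl
  have hWg : ∀ (g : G) (x : V), x ∈ W → ρ g x ∈ W := by
    intro g x hx
    have h := W.smul_mem (MonoidAlgebra.of k G g) hx
    rwa [hsmulG (MonoidAlgebra.of k G g) x, Representation.asAlgebraHom_of] at h
  have hWk : ∀ (c : k) (x : V), x ∈ W → c • x ∈ W := by
    intro c x hx
    have h := W.smul_mem (algebraMap k (MonoidAlgebra k G) c) hx
    rwa [hsmulG (algebraMap k (MonoidAlgebra k G) c) x, AlgHom.commutes, Module.algebraMap_end_apply] at h
  -- the submodule W as a `k[N]`-submodule of ρ'.asModule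
  have hW'r : ∀ (r : MonoidAlgebra k N) (x : V), x ∈ W → ρ'.asAlgebraHom r x ∈ W := by
    intro r
    induction r using MonoidAlgebra.induction_on with
    | of n =>
      intro x hx
      rw [Representation.asAlgebraHom_of]
      exact hWg ↑n x hx
    | add p q hp hq =>
      intro x hx
      rw [map_add, LinearMap.add_apply]
      exact W.add_mem (hp x hx) (hq x hx)
    | smul c p hp =>
      intro x hx
      rw [map_smul, LinearMap.smul_apply]
      exact hWk c _ (hp x hx)
  let W' : Submodule (MonoidAlgebra k N) ρ'.asModule :=
    { carrier := (W : Set ρ.asModule)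
      add_mem' := fun hx hy => W.add_mem hx hy
      zero_mem' := W.zero_mem
      smul_mem' := fun r x hx => by
        show r • x ∈ W
        rw [hsmulN]
        exact hW'r r x hx }
  haveI := hN
  obtain ⟨C, hC⟩ := exists_isCompl W'
  let π := W'.linearProjOfIsCompl C hC
  set f : V → V := fun v => ((π v : W') : ρ'.asModule) with hfdef
  have hf_mem : ∀ v : V, f v ∈ W := fun v => (π v).2
  have hf_id : ∀ v ∈ W, f v = v := by
    intro v hv
    have h : π v = ⟨v, hv⟩ := Submodule.linearProjOfIsCompl_apply_left hC ⟨v, hv⟩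
    simp only [hfdef, h]
    rfl
  have hf_add : ∀ x y : V, f (x + y) = f x + f y := by
    intro x y
    simp only [hfdef]
    rw [show ((x + y : V) : ρ'.asModule) = (x : ρ'.asModule) + y from rfl]
    erw [map_add]
    rfl
  have halg : ∀ (c : k) (x : ρ'.asModule), (algebraMap k (MonoidAlgebra k N) c) • x = c • x := by
    intro c x
    rw [hsmulN, AlgHom.commutes]
    erw [Module.algebraMap_end_apply]
    rfl
  have hf_k : ∀ (c : k) (x : V), f (c • x) = c • f x := by
    intro c x
    simp only [hfdef]
    erw [← halg c x, map_smul, Submodule.coe_smul, halg]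
    rfl
  have hρ'n : ∀ (n : N) (x : ρ'.asModule), (MonoidAlgebra.of k N n) • x = ρ (↑n) x := by
    intro n x
    rw [hsmulN, Representation.asAlgebraHom_of]
    rfl
  have hf_N : ∀ (n : N) (x : V), f (ρ ↑n x) = ρ ↑n (f x) := by
    intro n x
    simp only [hfdef]
    erw [← hρ'n n x, map_smul, Submodule.coe_smul, hρ'n]
  -- the conjugates
  set Φ : G → V → V := fun g v => ρ g (f (ρ g⁻¹ v)) with hΦdef
  have hΦn : ∀ (g : G) (n : N), Φ (g * ↑n) = Φ g := by
    intro g n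
    funext v
    simp only [hΦdef]
    rw [show ((g * (↑n : G))⁻¹ : G) = ↑(n⁻¹) * g⁻¹ by simp [mul_inv_rev],
      ← hcomp ↑(n⁻¹) g⁻¹ v, hf_N n⁻¹, hcomp (g * ↑n) ↑(n⁻¹),
      show g * ↑n * ↑(n⁻¹) = g by simp]
  have hΦconst : ∀ g g' : G, (g : G ⧸ N) = (g' : G ⧸ N) → Φ g = Φ g' := by
    intro g g' h
    have hn : g⁻¹ * g' ∈ N := QuotientGroup.eq.mp h
    have he : g' = g * ((⟨g⁻¹ * g', hn⟩ : N) : G) := by simp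
    rw [he, hΦn]
  -- the averaged projection
  set T : V → V := fun v => (N.index : k)⁻¹ • ∑ c : G ⧸ N, Φ (Quotient.out c) v with hTdef
  have hT_add : ∀ x y : V, T (x + y) = T x + T y := by
    intro x y
    simp only [hTdef]
    rw [← smul_add, ← Finset.sum_add_distrib]
    congr 1
    refine Finset.sum_congr rfl fun c _ => ?_
    simp only [hΦdef]
    rw [map_add, hf_add, map_add]
  have hT_k : ∀ (c : k) (x : V), T (c • x) = c • T x := by
    intro c x
    simp only [hTdef]
    rw [smul_comm]
    congr 1
    rw [Finset.smul_sum]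
    refine Finset.sum_congr rfl fun d _ => ?_
    simp only [hΦdef]
    rw [map_smul, hf_k, map_smul]
  have hT_mem : ∀ v : V, T v ∈ W := by
    intro v
    exact hWk _ _ (W.sum_mem fun c _ => hWg _ _ (hf_mem _))
  have hT_id : ∀ v ∈ W, T v = v := by
    intro v hv
    have hterm : ∀ c : G ⧸ N, Φ (Quotient.out c) v = v := by
      intro c
      simp only [hΦdef]
      erw [hf_id _ (hWg _ _ hv), hcomp, mul_inv_cancel, map_one, Module.End.one_apply]
    simp only [hTdef]
    erw [Finset.sum_congr rfl fun c _ => hterm c, Finset.sum_const, Finset.card_univ]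
    rw [show Fintype.card (G ⧸ N) = N.index from Nat.card_eq_fintype_card.symm]
    erw [← Nat.cast_smul_eq_nsmul k, smul_smul, inv_mul_cancel₀ hchar, one_smul]
  have hT_G : ∀ (g : G) (v : V), T (ρ g v) = ρ g (T v) := by
    intro g v
    have key : ∀ h : G, Φ h (ρ g v) = ρ g (Φ (g⁻¹ * h) v) := by
      intro h
      simp only [hΦdef]
      rw [hcomp h⁻¹ g v, hcomp g (g⁻¹ * h), show g * (g⁻¹ * h) = h by group,
        show (g⁻¹ * h)⁻¹ = h⁻¹ * g by group]
    have h2 : ∀ c : G ⧸ N, Φ (g⁻¹ * Quotient.out c) = Φ (Quotient.out (g⁻¹ • c)) := by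
      intro c
      apply hΦconst
      rw [QuotientGroup.out_eq', ← smul_eq_mul]
      exact MulAction.Quotient.mk_smul_out (H := N) g⁻¹ c
    calc T (ρ g v)
        = (N.index : k)⁻¹ • ∑ c : G ⧸ N, ρ g (Φ (Quotient.out (g⁻¹ • c)) v) := by
          simp only [hTdef]
          congr 1
          refine Finset.sum_congr rfl fun c _ => ?_
          rw [key, h2]
      _ = (N.index : k)⁻¹ • ∑ c : G ⧸ N, ρ g (Φ (Quotient.out c) v) := by
          congr 1
          exact Fintype.sum_equiv (MulAction.toPerm (g⁻¹ : G)) _ _ fun c => rfl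
      _ = ρ g (T v) := by
          simp only [hTdef]
          rw [map_smul, map_sum]
  have hT0 : T 0 = 0 := by
    have h := hT_add 0 0
    rw [add_zero] at h
    exact (left_eq_add.mp h)
  have hT_sub : ∀ x y : V, T (x - y) = T x - T y := by
    intro x y
    have hneg : T (-y) = -T y := by
      have h := hT_k (-1) y
      rwa [neg_one_smul, neg_one_smul] at h
    rw [sub_eq_add_neg, hT_add, hneg, sub_eq_add_neg]
  have hTr : ∀ (r : MonoidAlgebra k G) (x : V), T x = 0 → T (ρ.asAlgebraHom r x) = 0 := by
    intro r
    induction r using MonoidAlgebra.induction_on with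
    | of g =>
      intro x hx
      rw [Representation.asAlgebraHom_of, hT_G, hx, map_zero]
    | add p q hp hq =>
      intro x hx
      rw [map_add, LinearMap.add_apply, hT_add, hp x hx, hq x hx, add_zero]
    | smul c p hp =>
      intro x hx
      rw [map_smul, LinearMap.smul_apply, hT_k, hp x hx, smul_zero]
  let Wc : Submodule (MonoidAlgebra k G) ρ.asModule :=
    { carrier := {v | T v = 0}
      add_mem' := fun {x y} hx hy => by
        show T (x + y) = 0
        erw [hT_add, hx, hy, add_zero]
      zero_mem' := hT0
      smul_mem' := fun r x hx => by
        show T (r • x) = 0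
        rw [hsmulG]
        exact hTr r x hx }
  refine ⟨Wc, ?_, ?_⟩
  · rw [Submodule.disjoint_def]
    intro x hxW hxWc
    have h1 : T x = x := hT_id x hxW
    have h2 : T x = 0 := hxWc
    rw [h2] at h1
    exact h1.symm
  · rw [codisjoint_iff, eq_top_iff]
    rintro v -
    obtain ⟨w, rfl⟩ : ∃ w : V, w = v := ⟨v, rfl⟩
    have h1 : T w ∈ W := hT_mem w
    have h2 : w - T w ∈ Wc := by
      show T (w - T w) = 0
      rw [hT_sub, hT_id _ h1, sub_self]
    erw [Submodule.mem_sup]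
    exact ⟨T w, h1, w - T w, h2, by show T w + (w - T w) = w; abel⟩
end

section
/- Conversely, if G acts completely reducibly on V and N ◁ G is a normal subgroup, then N acts completely reducibly on V (Clifford's theorem, semisimplicity part). -/
/-!
Every `ρ g` permutes the `N`-submodules of `V` (this is where normality enters), hence fixes
their socle, the sum of all irreducible `N`-submodules. The socle is therefore a `G`-submodule
and has a `G`-stable complement, which is in particular `N`-stable. Were that complement
nonzero, it would contain an irreducible `N`-submodule (finite dimension), which also lies in
the socle; so the socle is all of `V`.
-/

theorem OrderIso.map_sSup_atoms {α β : Type*} [CompleteLattice α] [CompleteLattice β]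
    (e : α ≃o β) : e (sSup {a | IsAtom a}) = sSup {b | IsAtom b} := by
  rw [e.map_sSup_eq_sSup_symm_preimage]
  congr 1
  ext b
  exact e.symm.isAtom_iff b

theorem sSup_atoms_eq_top_of_isCompl {α : Type*} [CompleteLattice α] [IsAtomic α] {b : α}
    (h : IsCompl (sSup {a : α | IsAtom a}) b) : sSup {a : α | IsAtom a} = ⊤ := by
  obtain rfl | ⟨a, ha, hab⟩ := eq_bot_or_exists_atom_le b
  · exact codisjoint_bot.mp h.codisjoint
  · exact absurd (le_bot_iff.mp (h.disjoint.le_bot.trans' (le_inf (le_sSup ha) hab))) ha.1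

namespace Representation

section Monoid

variable {k G H V : Type*} [CommSemiring k] [Monoid G] [Monoid H] [AddCommMonoid V] [Module k V]
  (ρ : Representation k G V)

lemma invtSubmodule_le_invtSubmodule_comp (f : H →* G) :
    ρ.invtSubmodule ≤ invtSubmodule (ρ.comp f) :=
  fun _ hp ↦ (mem_invtSubmodule _).mpr fun h ↦ (ρ.mem_invtSubmodule).mp hp (f h)

lemma isCompl_coe_invtSubmodule_iff {p q : ρ.invtSubmodule} :
    IsCompl (p : Submodule k V) q ↔ IsCompl p q := by
  simp only [isCompl_iff, disjoint_iff, codisjoint_iff, ← Subtype.coe_inj, Sublattice.coe_inf,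
    Sublattice.coe_sup, invtSubmodule.coe_bot, invtSubmodule.coe_top]

end Monoid

variable {k G V : Type*} [CommSemiring k] [Group G] [AddCommMonoid V] [Module k V]
  (ρ : Representation k G V) (N : Subgroup G) [hN : N.Normal]

lemma map_mem_invtSubmodule_comp_subtype (g : G) {p : Submodule k V}
    (hp : p ∈ invtSubmodule (ρ.comp N.subtype)) :
    p.map (ρ g) ∈ invtSubmodule (ρ.comp N.subtype) := by
  rw [mem_invtSubmodule] at hp ⊢
  rintro n _ ⟨v, hv, rfl⟩
  refine ⟨ρ (g⁻¹ * n * g) v, hp ⟨_, hN.conj_mem' n n.2 g⟩ hv, ?_⟩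
  simp [← Module.End.mul_apply, ← map_mul, mul_assoc]

lemma map_map_inv (g : G) (p : Submodule k V) : (p.map (ρ g)).map (ρ g⁻¹) = p := by
  rw [← Submodule.map_comp, ← Module.End.mul_eq_comp, ← map_mul, inv_mul_cancel, map_one,
    Module.End.one_eq_id, Submodule.map_id]

def conjInvtSubmodule (g : G) :
    invtSubmodule (ρ.comp N.subtype) ≃o invtSubmodule (ρ.comp N.subtype) where
  toFun p := ⟨p.1.map (ρ g), ρ.map_mem_invtSubmodule_comp_subtype N g p.2⟩
  invFun p := ⟨p.1.map (ρ g⁻¹), ρ.map_mem_invtSubmodule_comp_subtype N g⁻¹ p.2⟩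
  left_inv p := Subtype.ext (ρ.map_map_inv g p)
  right_inv p := Subtype.ext (by simpa using ρ.map_map_inv g⁻¹ p)
  map_rel_iff' := Submodule.map_le_map_iff_of_injective (ρ.apply_bijective g).1 _ _

lemma mem_invtSubmodule_of_forall_conjInvtSubmodule_eq {p : invtSubmodule (ρ.comp N.subtype)}
    (hp : ∀ g, ρ.conjInvtSubmodule N g p = p) : (p : Submodule k V) ∈ ρ.invtSubmodule :=
  (mem_invtSubmodule _).mpr fun g ↦
    (Module.End.mem_invtSubmodule_iff_map_le _).mpr (congrArg Subtype.val (hp g)).le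

lemma coe_mapSubmodule_symm_sSup_atoms_mem_invtSubmodule :
    ((mapSubmodule (ρ.comp N.subtype)).symm
      (sSup {a : Submodule (MonoidAlgebra k N) (asModule (ρ.comp N.subtype)) | IsAtom a}) :
        Submodule k V) ∈ ρ.invtSubmodule := by
  set e := mapSubmodule (ρ.comp N.subtype)
  refine ρ.mem_invtSubmodule_of_forall_conjInvtSubmodule_eq N fun g ↦ ?_
  rw [e.eq_symm_apply]
  exact (e.symm.trans ((ρ.conjInvtSubmodule N g).trans e)).map_sSup_atoms

end Representation

open Representation

/-- Clifford's theorem (semisimplicity part): if `G` acts completely reducibly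
on `V` and `N` is a normal subgroup of `G`, then `N` acts completely reducibly
on `V`. -/
theorem semisimple_restrict_normal
    {k : Type*} [Field k] {G : Type*} [Group G]
    {V : Type*} [AddCommGroup V] [Module k V] [FiniteDimensional k V]
    (ρ : Representation k G V)
    (N : Subgroup G) [N.Normal]
    (hG : IsSemisimpleModule (MonoidAlgebra k G) ρ.asModule) :
    IsSemisimpleModule (MonoidAlgebra k N) (Representation.asModule (ρ.comp N.subtype : Representation k N V)) := by
  let e := mapSubmodule (ρ.comp N.subtype)
  have : IsArtinian (MonoidAlgebra k N) (asModule (ρ.comp N.subtype)) :=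
    isArtinian_of_tower k (inferInstanceAs (IsArtinian k V))
  have : ComplementedLattice ρ.invtSubmodule :=
    ρ.mapSubmodule.complementedLattice_iff.mpr ((isSemisimpleModule_iff _ _).mp hG)
  obtain ⟨t, ht⟩ := exists_isCompl
    (⟨_, ρ.coe_mapSubmodule_symm_sSup_atoms_mem_invtSubmodule N⟩ : ρ.invtSubmodule)
  let t' : invtSubmodule (ρ.comp N.subtype) :=
    ⟨t, ρ.invtSubmodule_le_invtSubmodule_comp N.subtype t.2⟩
  have hcompl : IsCompl
      (sSup {a : Submodule (MonoidAlgebra k N) (asModule (ρ.comp N.subtype)) | IsAtom a})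
      (e t') := by
    rw [← e.apply_symm_apply (sSup _), ← e.isCompl_iff]
    exact (isCompl_coe_invtSubmodule_iff _).mp ((isCompl_coe_invtSubmodule_iff ρ).mpr ht)
  exact (isSemisimpleModule_iff _ _).mpr
    (complementedLattice_of_sSup_atoms_eq_top (sSup_atoms_eq_top_of_isCompl hcompl))
end
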